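/- arXiv:2511.10746 — 2 statements merged into one kernel-verified Lean document; each statement's English description precedes it below -/
import Mathlib

section
/- Let F₁, F₂, F be the right augmented Chow functions of weakly ranked posets P₁, P₂, P₁×P₂ with respect to kernels κ₁, κ₂, κ₁⊗κ₂. Then F = F₁⊗F₂ + x·(H₁⊗H₂)·F − x·(I⊗H₂)·F − x·(H₁⊗I)·F + x·F, where H₁, H₂ are the corresponding Chow functions. -/
open Finset Polynomial


variable {P P₁ P₂ : Type*}

/-- A weak rank function on a poset, in the sense of Brenti/CF25. -/
def IsWeakRank [Preorder P] (rk : P → P → ℤ) : Prop :=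
  (∀ s t : P, s < t → 0 < rk s t) ∧
    ∀ s u t : P, s ≤ u → u ≤ t → rk s t = rk s u + rk u t

noncomputable section
open scoped Classical

/-- Membership in the rank-bounded incidence algebra `J_rk(P)`:
functions on intervals with values in `ℤ[x]` of degree bounded by the rank. -/
def InJ [Preorder P] (rk : P → P → ℤ) (a : P → P → Polynomial ℤ) : Prop :=
  (∀ s t : P, ¬ s ≤ t → a s t = 0) ∧
    ∀ s t : P, s ≤ t → ((a s t).natDegree : ℤ) ≤ rk s t

/-- Convolution product in the incidence algebra. -/
def conv [Fintype P] (a b : P → P → Polynomial ℤ) : P → P → Polynomial ℤ :=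
  fun s t => ∑ u : P, a s u * b u t

/-- The identity (delta function) of the incidence algebra. -/
def delta : P → P → Polynomial ℤ := fun s t => if s = t then 1 else 0

/-- The reversal operation `(a^rev)_{s,t} = x^{rk(s,t)}·a_{s,t}(x⁻¹)`. -/
def rev (rk : P → P → ℤ) (a : P → P → Polynomial ℤ) : P → P → Polynomial ℤ :=
  fun s t => (a s t).reflect (rk s t).toNat

/-- Entrywise tensor product of incidence functions on a product poset. -/
def tensor (a₁ : P₁ → P₁ → Polynomial ℤ) (a₂ : P₂ → P₂ → Polynomial ℤ) :
    P₁ × P₂ → P₁ × P₂ → Polynomial ℤ :=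
  fun p q => a₁ p.1 q.1 * a₂ p.2 q.2

/-- The sum rank function on a product poset. -/
def prodRk (rk₁ : P₁ → P₁ → ℤ) (rk₂ : P₂ → P₂ → ℤ) : P₁ × P₂ → P₁ × P₂ → ℤ :=
  fun p q => rk₁ p.1 q.1 + rk₂ p.2 q.2

/-- A kernel: an element of `J_rk(P)` which is invertible with `κ⁻¹ = κ^rev`. -/
def IsKernel [Preorder P] [Fintype P] (rk : P → P → ℤ) (κ : P → P → Polynomial ℤ) : Prop :=
  InJ rk κ ∧ conv κ (rev rk κ) = delta ∧ conv (rev rk κ) κ = delta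

/-- The reduced kernel `κ̄`: `κ̄_{s,s} = -1` and `κ̄_{s,t} = κ_{s,t}/(x-1)` for `s ≠ t`. -/
def IsReducedKernel [Preorder P] (κ κb : P → P → Polynomial ℤ) : Prop :=
  (∀ s : P, κb s s = -1) ∧ ∀ s t : P, s ≠ t → (X - 1) * κb s t = κ s t

/-- The Chow function `H = -κ̄⁻¹` associated to a reduced kernel `κ̄`. -/
def IsChowFunction [Preorder P] [Fintype P] (κb H : P → P → Polynomial ℤ) : Prop :=
  conv κb H = -delta ∧ conv H κb = -delta

/-- The right KLS function of `(P, κ)`. -/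
def IsRightKLS [Preorder P] [Fintype P] (rk : P → P → ℤ)
    (κ f : P → P → Polynomial ℤ) : Prop :=
  InJ rk f ∧ (∀ s : P, f s s = 1) ∧
    (∀ s t : P, s < t → 2 * ((f s t).natDegree : ℤ) < rk s t) ∧
    rev rk f = conv κ f

/-- The left KLS function of `(P, κ)`. -/
def IsLeftKLS [Preorder P] [Fintype P] (rk : P → P → ℤ)
    (κ g : P → P → Polynomial ℤ) : Prop :=
  InJ rk g ∧ (∀ s : P, g s s = 1) ∧
    (∀ s t : P, s < t → 2 * ((g s t).natDegree : ℤ) < rk s t) ∧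
    rev rk g = conv g κ

/-- The zeta function of a poset. -/
def zeta [Preorder P] : P → P → Polynomial ℤ := fun s t => if s ≤ t then 1 else 0

/-- Convolution powers. -/
def convPow [Fintype P] (a : P → P → Polynomial ℤ) : ℕ → P → P → Polynomial ℤ
  | 0 => delta
  | k + 1 => conv a (convPow a k)

/-- The inverse of a unitriangular element of the incidence algebra,
via the finite geometric series `∑ (I - a)^k`. -/
def invInc [Fintype P] (a : P → P → Polynomial ℤ) : P → P → Polynomial ℤ :=
  ∑ k ∈ Finset.range (Fintype.card P), convPow (delta - a) k

/-- The characteristic function `χ = ζ⁻¹ · ζ^rev` of a weakly ranked poset. -/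
def charFn [Preorder P] [Fintype P] (rk : P → P → ℤ) : P → P → Polynomial ℤ :=
  conv (invInc zeta) (rev rk zeta)

/-- The reduced characteristic function `χ̄`. -/
def charFnRed [Preorder P] [Fintype P] (rk : P → P → ℤ) : P → P → Polynomial ℤ :=
  fun s t => if s = t then -1 else charFn rk s t /ₘ (X - C 1)

/-- The Chow function `H = -χ̄⁻¹` of a weakly ranked poset w.r.t. the characteristic kernel. -/
def chowFn [Preorder P] [Fintype P] (rk : P → P → ℤ) : P → P → Polynomial ℤ :=
  invInc (-(charFnRed rk))

end


section AuxLemmas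

open scoped Classical

variable {P P₁ P₂ : Type*}

lemma conv_assoc' [Fintype P] (a b c : P → P → Polynomial ℤ) :
    conv (conv a b) c = conv a (conv b c) := by
  funext s t
  simp only [conv, Finset.sum_mul, Finset.mul_sum, mul_assoc]
  rw [Finset.sum_comm]

lemma conv_delta' [Fintype P] (a : P → P → Polynomial ℤ) : conv a delta = a := by
  funext s t
  simp [conv, delta]

lemma delta_conv' [Fintype P] (a : P → P → Polynomial ℤ) : conv delta a = a := by
  funext s t
  simp [conv, delta]

lemma conv_add_left' [Fintype P] (a b c : P → P → Polynomial ℤ) :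
    conv (a + b) c = conv a c + conv b c := by
  funext s t
  simp [conv, add_mul, Finset.sum_add_distrib]

lemma conv_sub_left' [Fintype P] (a b c : P → P → Polynomial ℤ) :
    conv (a - b) c = conv a c - conv b c := by
  funext s t
  simp [conv, sub_mul, Finset.sum_sub_distrib]

lemma conv_add_right' [Fintype P] (a b c : P → P → Polynomial ℤ) :
    conv a (b + c) = conv a b + conv a c := by
  funext s t
  simp [conv, mul_add, Finset.sum_add_distrib]

lemma conv_smul_left' [Fintype P] (r : Polynomial ℤ) (a b : P → P → Polynomial ℤ) :
    conv (r • a) b = r • conv a b := by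
  funext s t
  simp [conv, Finset.mul_sum, mul_assoc]

lemma conv_smul_right' [Fintype P] (r : Polynomial ℤ) (a b : P → P → Polynomial ℤ) :
    conv a (r • b) = r • conv a b := by
  funext s t
  simp [conv, Finset.mul_sum, mul_left_comm]

lemma conv_neg_left' [Fintype P] (a b : P → P → Polynomial ℤ) :
    conv (-a) b = -conv a b := by
  funext s t
  simp [conv]

lemma conv_neg_right' [Fintype P] (a b : P → P → Polynomial ℤ) :
    conv a (-b) = -conv a b := by
  funext s t
  simp [conv]

lemma tensor_conv' [Fintype P₁] [Fintype P₂]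
    (a₁ b₁ : P₁ → P₁ → Polynomial ℤ) (a₂ b₂ : P₂ → P₂ → Polynomial ℤ) :
    conv (tensor a₁ a₂) (tensor b₁ b₂) = tensor (conv a₁ b₁) (conv a₂ b₂) := by
  funext p q
  simp only [conv, tensor, Fintype.sum_prod_type, Finset.sum_mul_sum]
  exact Finset.sum_congr rfl fun _ _ => Finset.sum_congr rfl fun _ _ => by ring

lemma rk_nonneg' [PartialOrder P] {rk : P → P → ℤ} (h : IsWeakRank rk) {s t : P}
    (hst : s ≤ t) : 0 ≤ rk s t := by
  rcases hst.lt_or_eq with hlt | heq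
  · exact (h.1 s t hlt).le
  · subst heq
    have := h.2 s s s le_rfl le_rfl
    omega

lemma rev_tensor' [PartialOrder P₁] [PartialOrder P₂]
    (rk₁ : P₁ → P₁ → ℤ) (rk₂ : P₂ → P₂ → ℤ)
    (h₁ : IsWeakRank rk₁) (h₂ : IsWeakRank rk₂)
    (f₁ : P₁ → P₁ → Polynomial ℤ) (f₂ : P₂ → P₂ → Polynomial ℤ)
    (hf₁ : InJ rk₁ f₁) (hf₂ : InJ rk₂ f₂) :
    rev (prodRk rk₁ rk₂) (tensor f₁ f₂) = tensor (rev rk₁ f₁) (rev rk₂ f₂) := by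
  funext p q
  simp only [rev, tensor, prodRk]
  by_cases ha : p.1 ≤ q.1
  · by_cases hb : p.2 ≤ q.2
    · have n1 : 0 ≤ rk₁ p.1 q.1 := rk_nonneg' h₁ ha
      have n2 : 0 ≤ rk₂ p.2 q.2 := rk_nonneg' h₂ hb
      have d1' := hf₁.2 _ _ ha
      have d2' := hf₂.2 _ _ hb
      have d1 : (f₁ p.1 q.1).natDegree ≤ (rk₁ p.1 q.1).toNat := by omega
      have d2 : (f₂ p.2 q.2).natDegree ≤ (rk₂ p.2 q.2).toNat := by omega
      rw [show (rk₁ p.1 q.1 + rk₂ p.2 q.2).toNat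
            = (rk₁ p.1 q.1).toNat + (rk₂ p.2 q.2).toNat by omega]
      exact Polynomial.reflect_mul _ _ d1 d2
    · simp [hf₂.1 _ _ hb]
  · simp [hf₁.1 _ _ ha]

end AuxLemmas

/-- Right augmented Chow functions of a product of weakly ranked posets:
`F = F₁⊗F₂ + x·(H₁⊗H₂)·F − x·(I⊗H₂)·F − x·(H₁⊗I)·F + x·F`,
where `F = H·f^rev` with `f = f₁⊗f₂` the right KLS function of the product. -/
theorem augChowFunction_prod_right {P₁ P₂ : Type*} [PartialOrder P₁] [Fintype P₁]
    [PartialOrder P₂] [Fintype P₂]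
    (rk₁ : P₁ → P₁ → ℤ) (rk₂ : P₂ → P₂ → ℤ)
    (h₁ : IsWeakRank rk₁) (h₂ : IsWeakRank rk₂)
    (κ₁ : P₁ → P₁ → Polynomial ℤ) (κ₂ : P₂ → P₂ → Polynomial ℤ)
    (hκ₁ : IsKernel rk₁ κ₁) (hκ₂ : IsKernel rk₂ κ₂)
    (hd₁ : ∀ s : P₁, κ₁ s s = 1) (hd₂ : ∀ s : P₂, κ₂ s s = 1)
    (κb₁ : P₁ → P₁ → Polynomial ℤ) (κb₂ : P₂ → P₂ → Polynomial ℤ)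
    (κb : P₁ × P₂ → P₁ × P₂ → Polynomial ℤ)
    (hr₁ : IsReducedKernel κ₁ κb₁) (hr₂ : IsReducedKernel κ₂ κb₂)
    (hr : IsReducedKernel (tensor κ₁ κ₂) κb)
    (H₁ : P₁ → P₁ → Polynomial ℤ) (H₂ : P₂ → P₂ → Polynomial ℤ)
    (H : P₁ × P₂ → P₁ × P₂ → Polynomial ℤ)
    (hH₁ : IsChowFunction κb₁ H₁) (hH₂ : IsChowFunction κb₂ H₂)
    (hH : IsChowFunction κb H)
    (f₁ : P₁ → P₁ → Polynomial ℤ) (f₂ : P₂ → P₂ → Polynomial ℤ)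
    (hf₁ : IsRightKLS rk₁ κ₁ f₁) (hf₂ : IsRightKLS rk₂ κ₂ f₂)
    (F₁ : P₁ → P₁ → Polynomial ℤ) (F₂ : P₂ → P₂ → Polynomial ℤ)
    (F : P₁ × P₂ → P₁ × P₂ → Polynomial ℤ)
    (hF₁ : F₁ = conv H₁ (rev rk₁ f₁)) (hF₂ : F₂ = conv H₂ (rev rk₂ f₂))
    (hF : F = conv H (rev (prodRk rk₁ rk₂) (tensor f₁ f₂))) :
    F = tensor F₁ F₂ + (X : Polynomial ℤ) • conv (tensor H₁ H₂) F
        - (X : Polynomial ℤ) • conv (tensor delta H₂) F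
        - (X : Polynomial ℤ) • conv (tensor H₁ delta) F
        + (X : Polynomial ℤ) • F := by
  classical
  set g := rev (prodRk rk₁ rk₂) (tensor f₁ f₂) with hgdef
  -- expansion of κ₁, κ₂ in terms of reduced kernels
  have k₁ : ∀ s t : P₁, κ₁ s t = (X - 1) * κb₁ s t + X * delta s t := by
    intro s t
    by_cases h : s = t
    · subst h
      rw [hd₁ s, hr₁.1 s]
      simp [delta]
    · rw [hr₁.2 s t h]
      simp [delta, h]
  have k₂ : ∀ s t : P₂, κ₂ s t = (X - 1) * κb₂ s t + X * delta s t := by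
    intro s t
    by_cases h : s = t
    · subst h
      rw [hd₂ s, hr₂.1 s]
      simp [delta]
    · rw [hr₂.2 s t h]
      simp [delta, h]
  -- key expansion of the product reduced kernel
  have hk : κb = ((X : Polynomial ℤ) - 1) • tensor κb₁ κb₂
      + (X : Polynomial ℤ) • tensor κb₁ delta
      + (X : Polynomial ℤ) • tensor delta κb₂
      + (X : Polynomial ℤ) • delta := by
    funext p q
    by_cases h : p = q
    · subst h
      simp only [Pi.add_apply, Pi.smul_apply, smul_eq_mul, tensor]
      rw [hr.1 p, hr₁.1 p.1, hr₂.1 p.2]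
      simp [delta]
      ring
    · have hcancel : ((X : Polynomial ℤ) - 1) ≠ 0 := fun hc => by
        simpa using congrArg (Polynomial.eval 2) hc
      apply mul_left_cancel₀ hcancel
      rw [hr.2 p q h]
      have hpq : ¬(p.1 = q.1 ∧ p.2 = q.2) := fun hc => h (Prod.ext hc.1 hc.2)
      simp only [tensor, k₁, k₂, Pi.add_apply, Pi.smul_apply, smul_eq_mul, delta, if_neg h]
      by_cases h1 : p.1 = q.1
      · have h2 : ¬ p.2 = q.2 := fun h2 => hpq ⟨h1, h2⟩
        simp only [if_pos h1, if_neg h2]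
        ring
      · simp only [if_neg h1]
        ring
  -- tensor of the reversed KLS functions
  have hg : g = tensor (rev rk₁ f₁) (rev rk₂ f₂) :=
    rev_tensor' rk₁ rk₂ h₁ h₂ f₁ f₂ hf₁.1 hf₂.1
  have hTg : conv (tensor H₁ H₂) g = tensor F₁ F₂ := by
    rw [hg, tensor_conv', ← hF₁, ← hF₂]
  have hconvκbF : conv κb F = -g := by
    rw [hF, ← conv_assoc', hH.1, conv_neg_left', delta_conv']
  -- compute conv (tensor H₁ H₂) κb
  have hTκb : conv (tensor H₁ H₂) κb
      = ((X : Polynomial ℤ) - 1) • delta - (X : Polynomial ℤ) • tensor delta H₂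
        - (X : Polynomial ℤ) • tensor H₁ delta + (X : Polynomial ℤ) • tensor H₁ H₂ := by
    rw [hk, conv_add_right', conv_add_right', conv_add_right', conv_smul_right',
      conv_smul_right', conv_smul_right', conv_smul_right', conv_delta',
      tensor_conv', tensor_conv', tensor_conv', hH₁.2, hH₂.2, conv_delta', conv_delta']
    funext p q
    simp only [Pi.add_apply, Pi.sub_apply, Pi.smul_apply, Pi.neg_apply, smul_eq_mul,
      tensor, delta]
    by_cases h1 : p.1 = q.1 <;> by_cases h2 : p.2 = q.2 <;>
      simp only [if_pos, if_neg, h1, h2, Prod.ext_iff, if_true, if_false, and_true,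
        true_and, false_and, and_false, not_false_iff, eq_self_iff_true] <;>
      (try split_ifs) <;> ring
  have key : conv (conv (tensor H₁ H₂) κb) F = -(tensor F₁ F₂) := by
    rw [conv_assoc', hconvκbF, conv_neg_right', hTg]
  have expand : ((X : Polynomial ℤ) - 1) • F - (X : Polynomial ℤ) • conv (tensor delta H₂) F
      - (X : Polynomial ℤ) • conv (tensor H₁ delta) F
      + (X : Polynomial ℤ) • conv (tensor H₁ H₂) F = -(tensor F₁ F₂) := by
    rw [← key, hTκb, conv_add_left', conv_sub_left', conv_sub_left', conv_smul_left',
      conv_smul_left', conv_smul_left', conv_smul_left', delta_conv']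
  funext p q
  have h := congrFun (congrFun expand p) q
  simp only [Pi.add_apply, Pi.sub_apply, Pi.smul_apply, Pi.neg_apply, smul_eq_mul] at h ⊢
  linear_combination -h
end

section
/- Let G₁, G₂, G be the left augmented Chow functions of weakly ranked posets P₁, P₂, P₁×P₂ with respect to kernels κ₁, κ₂, κ₁⊗κ₂. Then G = G₁⊗G₂ + x·G·(H₁⊗H₂) − x·G·(I⊗H₂) − x·G·(H₁⊗I) + x·G. -/
open Finset Polynomial


variable {P P₁ P₂ : Type*}

section AuxConv

variable {P : Type*} [Fintype P]

lemma my_conv_assoc (a b c : P → P → Polynomial ℤ) :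
    conv (conv a b) c = conv a (conv b c) := by
  funext s t
  simp only [conv, Finset.sum_mul, Finset.mul_sum, mul_assoc]
  rw [Finset.sum_comm]

lemma my_conv_delta (a : P → P → Polynomial ℤ) : conv a delta = a := by
  funext s t
  simp only [conv, delta]
  rw [Finset.sum_eq_single t]
  · rw [if_pos rfl, mul_one]
  · intro u _ h
    rw [if_neg h, mul_zero]
  · intro h
    exact absurd (Finset.mem_univ t) h

lemma my_delta_conv (a : P → P → Polynomial ℤ) : conv delta a = a := by
  funext s t
  simp only [conv, delta]
  rw [Finset.sum_eq_single s]
  · rw [if_pos rfl, one_mul]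
  · intro u _ h
    rw [if_neg (Ne.symm h), zero_mul]
  · intro h
    exact absurd (Finset.mem_univ s) h

lemma my_add_conv (a b c : P → P → Polynomial ℤ) :
    conv (a + b) c = conv a c + conv b c := by
  funext s t
  simp [conv, add_mul, Finset.sum_add_distrib]

lemma my_conv_add (a b c : P → P → Polynomial ℤ) :
    conv a (b + c) = conv a b + conv a c := by
  funext s t
  simp [conv, mul_add, Finset.sum_add_distrib]

lemma my_smul_conv (r : Polynomial ℤ) (a b : P → P → Polynomial ℤ) :
    conv (r • a) b = r • conv a b := by
  funext s t
  simp [conv, Finset.mul_sum, mul_assoc]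

lemma my_conv_smul (r : Polynomial ℤ) (a b : P → P → Polynomial ℤ) :
    conv a (r • b) = r • conv a b := by
  funext s t
  simp only [conv, Pi.smul_apply, smul_eq_mul, Finset.mul_sum]
  exact Finset.sum_congr rfl fun u _ => by ring

lemma my_neg_conv (a b : P → P → Polynomial ℤ) : conv (-a) b = -conv a b := by
  funext s t
  simp [conv, Finset.sum_neg_distrib]

lemma my_conv_neg (a b : P → P → Polynomial ℤ) : conv a (-b) = -conv a b := by
  funext s t
  simp [conv, Finset.sum_neg_distrib]

lemma my_sub_conv (a b c : P → P → Polynomial ℤ) :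
    conv (a - b) c = conv a c - conv b c := by
  rw [sub_eq_add_neg, my_add_conv, my_neg_conv, sub_eq_add_neg]

lemma my_conv_sub (a b c : P → P → Polynomial ℤ) :
    conv a (b - c) = conv a b - conv a c := by
  rw [sub_eq_add_neg, my_conv_add, my_conv_neg, sub_eq_add_neg]

end AuxConv

section AuxTensor

variable {P₁ P₂ : Type*} [Fintype P₁] [Fintype P₂]

lemma my_conv_tensor (a₁ b₁ : P₁ → P₁ → Polynomial ℤ) (a₂ b₂ : P₂ → P₂ → Polynomial ℤ) :
    conv (tensor a₁ a₂) (tensor b₁ b₂) = tensor (conv a₁ b₁) (conv a₂ b₂) := by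
  funext s t
  simp only [conv, tensor, Fintype.sum_prod_type]
  rw [Finset.sum_mul_sum]
  exact Finset.sum_congr rfl fun u _ => Finset.sum_congr rfl fun v _ => by ring

lemma my_tensor_delta : tensor (delta : P₁ → P₁ → Polynomial ℤ)
    (delta : P₂ → P₂ → Polynomial ℤ) = delta := by
  funext s t
  simp only [tensor, delta]
  by_cases h1 : s.1 = t.1 <;> by_cases h2 : s.2 = t.2 <;>
    by_cases h : s = t <;>
    simp_all [Prod.ext_iff]

lemma my_tensor_neg_left (a : P₁ → P₁ → Polynomial ℤ) (b : P₂ → P₂ → Polynomial ℤ) :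
    tensor (-a) b = -tensor a b := by
  funext s t; simp [tensor]

lemma my_tensor_neg_right (a : P₁ → P₁ → Polynomial ℤ) (b : P₂ → P₂ → Polynomial ℤ) :
    tensor a (-b) = -tensor a b := by
  funext s t; simp [tensor]

end AuxTensor

lemma my_rk_nonneg {P : Type*} [PartialOrder P] {rk : P → P → ℤ}
    (h : IsWeakRank rk) {s t : P} (hst : s ≤ t) : 0 ≤ rk s t := by
  rcases hst.lt_or_eq with hlt | rfl
  · exact (h.1 s t hlt).le
  · have := h.2 s s s le_rfl le_rfl
    omega

lemma my_rev_tensor {P₁ P₂ : Type*} [PartialOrder P₁] [Fintype P₁]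
    [PartialOrder P₂] [Fintype P₂]
    {rk₁ : P₁ → P₁ → ℤ} {rk₂ : P₂ → P₂ → ℤ}
    (h₁ : IsWeakRank rk₁) (h₂ : IsWeakRank rk₂)
    {g₁ : P₁ → P₁ → Polynomial ℤ} {g₂ : P₂ → P₂ → Polynomial ℤ}
    (hJ₁ : InJ rk₁ g₁) (hJ₂ : InJ rk₂ g₂) :
    rev (prodRk rk₁ rk₂) (tensor g₁ g₂) = tensor (rev rk₁ g₁) (rev rk₂ g₂) := by
  funext s t
  simp only [rev, tensor, prodRk]
  by_cases hle1 : s.1 ≤ t.1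
  · by_cases hle2 : s.2 ≤ t.2
    · have d1 : (g₁ s.1 t.1).natDegree ≤ (rk₁ s.1 t.1).toNat := by
        have := hJ₁.2 s.1 t.1 hle1
        have := my_rk_nonneg h₁ hle1
        omega
      have d2 : (g₂ s.2 t.2).natDegree ≤ (rk₂ s.2 t.2).toNat := by
        have := hJ₂.2 s.2 t.2 hle2
        have := my_rk_nonneg h₂ hle2
        omega
      have htn : (rk₁ s.1 t.1 + rk₂ s.2 t.2).toNat
          = (rk₁ s.1 t.1).toNat + (rk₂ s.2 t.2).toNat := by
        have := my_rk_nonneg h₁ hle1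
        have := my_rk_nonneg h₂ hle2
        omega
      rw [htn, Polynomial.reflect_mul _ _ d1 d2]
    · rw [hJ₂.1 s.2 t.2 hle2]
      simp
  · rw [hJ₁.1 s.1 t.1 hle1]
    simp

lemma my_X_sub_one_ne : (X - 1 : Polynomial ℤ) ≠ 0 := by
  intro h
  have := congrArg (Polynomial.eval 0) h
  simp at this

lemma my_kernel_decomp {P₁ P₂ : Type*} [PartialOrder P₁] [PartialOrder P₂]
    (κ₁ : P₁ → P₁ → Polynomial ℤ) (κ₂ : P₂ → P₂ → Polynomial ℤ)
    (κb₁ : P₁ → P₁ → Polynomial ℤ) (κb₂ : P₂ → P₂ → Polynomial ℤ)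
    (κb : P₁ × P₂ → P₁ × P₂ → Polynomial ℤ)
    (hd₁ : ∀ s : P₁, κ₁ s s = 1) (hd₂ : ∀ s : P₂, κ₂ s s = 1)
    (hr₁ : IsReducedKernel κ₁ κb₁) (hr₂ : IsReducedKernel κ₂ κb₂)
    (hr : IsReducedKernel (tensor κ₁ κ₂) κb) :
    κb = (X - 1 : Polynomial ℤ) • tensor κb₁ κb₂ + (X : Polynomial ℤ) • tensor κb₁ delta
      + (X : Polynomial ℤ) • tensor delta κb₂ + (X : Polynomial ℤ) • delta := by
  funext s t
  simp only [Pi.add_apply, Pi.smul_apply, smul_eq_mul, tensor, delta]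
  by_cases h : s = t
  · subst h
    rw [hr.1 s, hr₁.1 s.1, hr₂.1 s.2, if_pos rfl, if_pos rfl, if_pos rfl]
    ring
  · apply mul_left_cancel₀ my_X_sub_one_ne
    rw [hr.2 s t h]
    have h12 : ¬(s.1 = t.1 ∧ s.2 = t.2) := fun ⟨a, b⟩ => h (Prod.ext a b)
    by_cases h1 : s.1 = t.1
    · have h2 : s.2 ≠ t.2 := fun hh => h12 ⟨h1, hh⟩
      rw [if_pos h1, if_neg h2, if_neg h]
      rw [tensor]
      rw [h1, hd₁ t.1, hr₁.1 t.1, ← hr₂.2 s.2 t.2 h2]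
      ring
    · by_cases h2 : s.2 = t.2
      · rw [if_neg h1, if_pos h2, if_neg h]
        rw [tensor]
        rw [h2, hd₂ t.2, hr₂.1 t.2, ← hr₁.2 s.1 t.1 h1]
        ring
      · rw [if_neg h1, if_neg h2, if_neg h]
        rw [tensor]
        rw [← hr₁.2 s.1 t.1 h1, ← hr₂.2 s.2 t.2 h2]
        ring

lemma my_key_algebra {P : Type*} [Fintype P]
    (a b p q T H K G : P → P → Polynomial ℤ)
    (hap : conv a p = -delta) (hpa : conv p a = -delta)
    (hbq : conv b q = -delta) (hqb : conv q b = -delta)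
    (hqa : conv q a = conv a q) (hbp : conv b p = conv p b)
    (hK : K = (X - 1 : Polynomial ℤ) • conv a b + (X : Polynomial ℤ) • a
      + (X : Polynomial ℤ) • b + (X : Polynomial ℤ) • delta)
    (hKH : conv K H = -delta) (hHK : conv H K = -delta)
    (hG : G = conv T H) :
    G = conv T (conv p q) + (X : Polynomial ℤ) • conv G (conv p q)
      - (X : Polynomial ℤ) • conv G q - (X : Polynomial ℤ) • conv G p
      + (X : Polynomial ℤ) • G := by
  have pa_ : ∀ m, conv p (conv a m) = -m := fun m => by
    rw [← my_conv_assoc, hpa, my_neg_conv, my_delta_conv]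
  have ap_ : ∀ m, conv a (conv p m) = -m := fun m => by
    rw [← my_conv_assoc, hap, my_neg_conv, my_delta_conv]
  have bq_ : ∀ m, conv b (conv q m) = -m := fun m => by
    rw [← my_conv_assoc, hbq, my_neg_conv, my_delta_conv]
  have qb_ : ∀ m, conv q (conv b m) = -m := fun m => by
    rw [← my_conv_assoc, hqb, my_neg_conv, my_delta_conv]
  have qa_ : ∀ m, conv q (conv a m) = conv a (conv q m) := fun m => by
    rw [← my_conv_assoc, hqa, my_conv_assoc]
  have bp_ : ∀ m, conv b (conv p m) = conv p (conv b m) := fun m => by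
    rw [← my_conv_assoc, hbp, my_conv_assoc]
  have expandR : ∀ m, conv m K = (X - 1 : Polynomial ℤ) • conv m (conv a b)
      + (X : Polynomial ℤ) • conv m a + (X : Polynomial ℤ) • conv m b
      + (X : Polynomial ℤ) • m := by
    intro m
    rw [hK, my_conv_add, my_conv_add, my_conv_add, my_conv_smul, my_conv_smul,
      my_conv_smul, my_conv_smul, my_conv_delta]
  have expandL : ∀ m, conv K m = (X - 1 : Polynomial ℤ) • conv a (conv b m)
      + (X : Polynomial ℤ) • conv a m + (X : Polynomial ℤ) • conv b m
      + (X : Polynomial ℤ) • m := by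
    intro m
    rw [hK, my_add_conv, my_add_conv, my_add_conv, my_smul_conv, my_smul_conv,
      my_smul_conv, my_smul_conv, my_delta_conv, my_conv_assoc]
  have hGK : conv G K = -T := by
    rw [hG, my_conv_assoc, hHK, my_conv_neg, my_conv_delta]
  have hpK_comm : conv p K = conv K p := by
    rw [expandR, expandL]
    simp only [my_conv_assoc, pa_, ap_, bq_, qb_, qa_, bp_, my_conv_neg, my_neg_conv,
      my_conv_delta, my_delta_conv, hap, hpa, hbq, hqb, hqa, hbp, neg_neg]
  have hqK_comm : conv q K = conv K q := by
    rw [expandR, expandL]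
    simp only [my_conv_assoc, pa_, ap_, bq_, qb_, qa_, bp_, my_conv_neg, my_neg_conv,
      my_conv_delta, my_delta_conv, hap, hpa, hbq, hqb, hqa, hbp, neg_neg]
  have hpqK_comm : conv (conv p q) K = conv K (conv p q) := by
    rw [my_conv_assoc, hqK_comm, ← my_conv_assoc, hpK_comm, my_conv_assoc]
  have hpqK : conv (conv p q) K = (X - 1 : Polynomial ℤ) • delta
      - (X : Polynomial ℤ) • q - (X : Polynomial ℤ) • p
      + (X : Polynomial ℤ) • conv p q := by
    rw [my_conv_assoc, expandR q]
    simp only [my_conv_add, my_conv_smul, my_conv_assoc, pa_, ap_, bq_, qb_, qa_, bp_,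
      my_conv_neg, my_neg_conv, my_conv_delta, my_delta_conv, hap, hpa, hbq, hqb,
      hqa, hbp, neg_neg]
    module
  have key : conv (conv T (conv p q) + (X : Polynomial ℤ) • conv G (conv p q)
      - (X : Polynomial ℤ) • conv G q - (X : Polynomial ℤ) • conv G p
      + (X : Polynomial ℤ) • G) K = conv G K := by
    simp only [my_add_conv, my_sub_conv, my_smul_conv]
    rw [my_conv_assoc G (conv p q) K, my_conv_assoc G q K, my_conv_assoc G p K,
      hpqK_comm, hqK_comm, hpK_comm]
    rw [← my_conv_assoc G K (conv p q), ← my_conv_assoc G K q, ← my_conv_assoc G K p,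
      hGK]
    rw [my_conv_assoc T (conv p q) K, hpqK]
    simp only [my_neg_conv, my_conv_add, my_conv_sub, my_conv_smul, my_conv_neg,
      my_conv_delta]
    module
  have h2 : conv (conv (conv T (conv p q) + (X : Polynomial ℤ) • conv G (conv p q)
      - (X : Polynomial ℤ) • conv G q - (X : Polynomial ℤ) • conv G p
      + (X : Polynomial ℤ) • G) K) H = conv (conv G K) H := by rw [key]
  rw [my_conv_assoc, my_conv_assoc, hKH, my_conv_neg, my_conv_neg, my_conv_delta,
    my_conv_delta, neg_inj] at h2
  exact h2.symm

/-- Left augmented Chow functions of a product of weakly ranked posets: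
`G = G₁⊗G₂ + x·G·(H₁⊗H₂) − x·G·(I⊗H₂) − x·G·(H₁⊗I) + x·G`,
where `G = g^rev·H` with `g = g₁⊗g₂` the left KLS function of the product. -/
theorem augChowFunction_prod_left {P₁ P₂ : Type*} [PartialOrder P₁] [Fintype P₁]
    [PartialOrder P₂] [Fintype P₂]
    (rk₁ : P₁ → P₁ → ℤ) (rk₂ : P₂ → P₂ → ℤ)
    (h₁ : IsWeakRank rk₁) (h₂ : IsWeakRank rk₂)
    (κ₁ : P₁ → P₁ → Polynomial ℤ) (κ₂ : P₂ → P₂ → Polynomial ℤ)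
    (hκ₁ : IsKernel rk₁ κ₁) (hκ₂ : IsKernel rk₂ κ₂)
    (hd₁ : ∀ s : P₁, κ₁ s s = 1) (hd₂ : ∀ s : P₂, κ₂ s s = 1)
    (κb₁ : P₁ → P₁ → Polynomial ℤ) (κb₂ : P₂ → P₂ → Polynomial ℤ)
    (κb : P₁ × P₂ → P₁ × P₂ → Polynomial ℤ)
    (hr₁ : IsReducedKernel κ₁ κb₁) (hr₂ : IsReducedKernel κ₂ κb₂)
    (hr : IsReducedKernel (tensor κ₁ κ₂) κb)
    (H₁ : P₁ → P₁ → Polynomial ℤ) (H₂ : P₂ → P₂ → Polynomial ℤ)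
    (H : P₁ × P₂ → P₁ × P₂ → Polynomial ℤ)
    (hH₁ : IsChowFunction κb₁ H₁) (hH₂ : IsChowFunction κb₂ H₂)
    (hH : IsChowFunction κb H)
    (g₁ : P₁ → P₁ → Polynomial ℤ) (g₂ : P₂ → P₂ → Polynomial ℤ)
    (hg₁ : IsLeftKLS rk₁ κ₁ g₁) (hg₂ : IsLeftKLS rk₂ κ₂ g₂)
    (G₁ : P₁ → P₁ → Polynomial ℤ) (G₂ : P₂ → P₂ → Polynomial ℤ)
    (G : P₁ × P₂ → P₁ × P₂ → Polynomial ℤ)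
    (hG₁ : G₁ = conv (rev rk₁ g₁) H₁) (hG₂ : G₂ = conv (rev rk₂ g₂) H₂)
    (hG : G = conv (rev (prodRk rk₁ rk₂) (tensor g₁ g₂)) H) :
    G = tensor G₁ G₂ + (X : Polynomial ℤ) • conv G (tensor H₁ H₂)
        - (X : Polynomial ℤ) • conv G (tensor delta H₂)
        - (X : Polynomial ℤ) • conv G (tensor H₁ delta)
        + (X : Polynomial ℤ) • G := by
  set a := tensor κb₁ (delta : P₂ → P₂ → Polynomial ℤ) with ha
  set b := tensor (delta : P₁ → P₁ → Polynomial ℤ) κb₂ with hb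
  set p := tensor H₁ (delta : P₂ → P₂ → Polynomial ℤ) with hp
  set q := tensor (delta : P₁ → P₁ → Polynomial ℤ) H₂ with hq
  set T := tensor (rev rk₁ g₁) (rev rk₂ g₂) with hTdef
  have hG' : G = conv T H := by
    rw [hG, my_rev_tensor h₁ h₂ hg₁.1 hg₂.1]
  have hpq : conv p q = tensor H₁ H₂ := by
    rw [hp, hq, my_conv_tensor, my_conv_delta, my_delta_conv]
  have hTG : tensor G₁ G₂ = conv T (conv p q) := by
    rw [hpq, hG₁, hG₂, hTdef, my_conv_tensor]
  have hap : conv a p = -delta := by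
    rw [ha, hp, my_conv_tensor, hH₁.1, my_conv_delta, my_tensor_neg_left,
      my_tensor_delta]
  have hpa : conv p a = -delta := by
    rw [ha, hp, my_conv_tensor, hH₁.2, my_conv_delta, my_tensor_neg_left,
      my_tensor_delta]
  have hbq : conv b q = -delta := by
    rw [hb, hq, my_conv_tensor, hH₂.1, my_conv_delta, my_tensor_neg_right,
      my_tensor_delta]
  have hqb : conv q b = -delta := by
    rw [hb, hq, my_conv_tensor, hH₂.2, my_conv_delta, my_tensor_neg_right,
      my_tensor_delta]
  have hqa : conv q a = conv a q := by
    rw [ha, hq, my_conv_tensor, my_conv_tensor, my_conv_delta, my_delta_conv,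
      my_conv_delta, my_delta_conv]
  have hbp : conv b p = conv p b := by
    rw [hb, hp, my_conv_tensor, my_conv_tensor, my_conv_delta, my_delta_conv,
      my_conv_delta, my_delta_conv]
  have hK : κb = (X - 1 : Polynomial ℤ) • conv a b + (X : Polynomial ℤ) • a
      + (X : Polynomial ℤ) • b + (X : Polynomial ℤ) • delta := by
    rw [ha, hb, my_conv_tensor, my_conv_delta, my_delta_conv]
    exact my_kernel_decomp κ₁ κ₂ κb₁ κb₂ κb hd₁ hd₂ hr₁ hr₂ hr
  rw [hTG, ← hpq]
  exact my_key_algebra a b p q T H κb G hap hpa hbq hqb hqa hbp hK hH.1 hH.2 hG'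
end
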